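/- arXiv:2112.00382 — 2 statements merged into one kernel-verified Lean document; each statement's English description precedes it below -/
import Mathlib

section
/- The space S_k = { p ∈ (P̃_k)² : p(ξ,η)·(ξ,η) = 0 } equals P̃_{k-1} · (−η, ξ), i.e., every such p has the form q(ξ,η)·(−η, ξ) for some homogeneous polynomial q of degree k−1, and conversely. -/
open MvPolynomial

namespace MvPolynomial

variable {σ R : Type*}

/-- For `n = 0` the hypothesis forces `p = 0`, so the truncated `n - 1` is harmless. -/
theorem IsHomogeneous.of_mul_X [CommSemiring R] {p : MvPolynomial σ R} {n : ℕ} {i : σ}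
    (h : (p * X i).IsHomogeneous n) : p.IsHomogeneous (n - 1) := by
  intro d hd
  have hweight : Finsupp.weight 1 (d + Finsupp.single i 1) = Finsupp.weight 1 d + 1 := by
    simp [Finsupp.weight_single]
  rw [← coeff_mul_X d i p] at hd
  have := h hd
  omega

theorem exists_eq_mul_X_of_mul_X_eq_mul_X [CommRing R] [IsDomain R] {i j : σ} (hij : i ≠ j)
    {a b : MvPolynomial σ R} (h : a * X i = b * X j) : ∃ q, a = q * X j ∧ b = q * X i := by
  have hdvd : X j ∣ a * X i := ⟨b, by rw [h, mul_comm]⟩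
  obtain ⟨q, rfl⟩ := (X_prime.dvd_or_dvd hdvd).resolve_right (X_dvd_X.not.mpr hij.symm)
  exact ⟨q, mul_comm _ _, mul_left_cancel₀ (X_ne_zero j) (by linear_combination -h)⟩

end MvPolynomial

theorem Sk_eq_homogeneous_rotation_general (k : ℕ)
    (p₁ p₂ : MvPolynomial (Fin 2) ℝ)
    (h₂ : p₂ ∈ homogeneousSubmodule (Fin 2) ℝ k) :
    p₁ * X 0 + p₂ * X 1 = 0 ↔
      ∃ q ∈ homogeneousSubmodule (Fin 2) ℝ (k - 1),
        p₁ = q * (-(X 1)) ∧ p₂ = q * X 0 := by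
  constructor
  · intro h
    have hrot : p₂ * X 1 = -p₁ * X 0 := by linear_combination h
    obtain ⟨q, hp₂, hp₁⟩ := exists_eq_mul_X_of_mul_X_eq_mul_X (by decide) hrot
    refine ⟨q, ?_, by linear_combination -hp₁, hp₂⟩
    rw [mem_homogeneousSubmodule] at h₂ ⊢
    exact (hp₂ ▸ h₂).of_mul_X
  · rintro ⟨q, -, rfl, rfl⟩
    ring

theorem Sk_eq_homogeneous_rotation (k : ℕ) (hk : 1 ≤ k)
    (p₁ p₂ : MvPolynomial (Fin 2) ℝ)
    (h₁ : p₁ ∈ homogeneousSubmodule (Fin 2) ℝ k)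
    (h₂ : p₂ ∈ homogeneousSubmodule (Fin 2) ℝ k) :
    p₁ * X 0 + p₂ * X 1 = 0 ↔
      ∃ q ∈ homogeneousSubmodule (Fin 2) ℝ (k - 1),
        p₁ = q * (-(X 1)) ∧ p₂ = q * X 0 :=
  Sk_eq_homogeneous_rotation_general k p₁ p₂ h₂
end

section
/- The eight second-order Nédélec shape functions v₁², …, v₈² on the reference triangle (edge functions v₁²–v₆² and inner functions v₇², v₈² as given) form a basis of the space (P₁)² ⊕ P̃₁·(−η, ξ), which has dimension 8. -/
open MvPolynomial

local notation "Mv" => MvPolynomial (Fin 2) ℝ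

/-- The map `q ↦ q · (−η, ξ)`. -/
noncomputable def rotMul : Mv →ₗ[ℝ] Mv × Mv :=
  LinearMap.prod (-(LinearMap.mulRight ℝ (X 1 : Mv))) (LinearMap.mulRight ℝ (X 0))

/-- The second-order triangular Nédélec space `(P₁)² ⊕ P̃₁·(−η, ξ)`. -/
noncomputable def NedelecTri2 : Submodule ℝ (Mv × Mv) :=
  ((restrictTotalDegree (Fin 2) ℝ 1).prod (restrictTotalDegree (Fin 2) ℝ 1)) ⊔
    Submodule.map rotMul (homogeneousSubmodule (Fin 2) ℝ 1)

/-- The eight second-order Nédélec shape functions on the reference triangle,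
written as pairs of polynomials in `ξ = X 0`, `η = X 1`. -/
noncomputable def shapeNT2 (j : Fin 8) : Mv × Mv :=
  match j with
  | 0 => (2 * (-(X 1) + 4 * X 1 * X 0), 2 * (2 * X 0 - 4 * X 0 ^ 2))
  | 1 => (2 * (-(2 : Mv) * X 1 + 4 * X 1 ^ 2), 2 * (X 0 - 4 * X 1 * X 0))
  | 2 => (2 * (-(2 : Mv) * X 1 + 4 * X 1 ^ 2),
          2 * (-(1 : Mv) + 3 * X 1 + X 0 - 4 * X 1 * X 0))
  | 3 => (2 * (3 * X 1 - 4 * X 1 ^ 2 - 4 * X 1 * X 0),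
          2 * ((2 : Mv) - 3 * X 1 - 6 * X 0 + 4 * X 1 * X 0 + 4 * X 0 ^ 2))
  | 4 => (2 * ((2 : Mv) - 6 * X 1 + 4 * X 1 ^ 2 - 3 * X 0 + 4 * X 1 * X 0),
          2 * (3 * X 0 - 4 * X 1 * X 0 - 4 * X 0 ^ 2))
  | 5 => (2 * (-(1 : Mv) + X 1 + 3 * X 0 - 4 * X 1 * X 0),
          2 * (-(2 : Mv) * X 0 + 4 * X 0 ^ 2))
  | 6 => (2 * (8 * X 1 - 8 * X 1 ^ 2 - 4 * X 1 * X 0),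
          2 * (-(4 : Mv) * X 0 + 8 * X 1 * X 0 + 4 * X 0 ^ 2))
  | 7 => (2 * (-(4 : Mv) * X 1 + 4 * X 1 ^ 2 + 8 * X 1 * X 0),
          2 * (8 * X 0 - 4 * X 1 * X 0 - 8 * X 0 ^ 2))

/-!
The space is spanned by the eight fields `(1,0), (ξ,0), (η,0), (0,1), (0,ξ), (0,η)` and
`(−ξη, ξ²), (−η², ξη)`, because `P₁` is spanned by `1, ξ, η` and `P̃₁` by `ξ, η`; hence its
dimension is at most `8`. Each shape function is an explicit combination of these fields, and the
shape functions are linearly independent: evaluating a vanishing combination at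
`(0,0), (1,0), (0,1), (1,1)` gives eight linear equations whose only solution is zero. Eight
independent vectors in a space of dimension at most `8` span it.
-/

open Submodule

theorem MvPolynomial.restrictTotalDegree_one_eq_span {σ R : Type*} [CommSemiring R] :
    restrictTotalDegree σ R 1 = span R (insert 1 (Set.range X)) := by
  apply le_antisymm
  · intro p hp
    have hdeg := (mem_restrictTotalDegree σ (m := 1) p).mp hp
    rw [← sum_homogeneousComponent p]
    refine sum_mem fun i hi => ?_
    obtain rfl | rfl : i = 0 ∨ i = 1 := by rw [Finset.mem_range] at hi; omega
    · rw [homogeneousComponent_zero, C_eq_smul_one]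
      exact smul_mem _ _ (subset_span (Set.mem_insert _ _))
    · refine span_mono (Set.subset_insert _ _) ?_
      rw [← homogeneousSubmodule_one_eq_span_X]
      exact homogeneousComponent_mem 1 p
  · rw [span_le]
    rintro _ (rfl | ⟨i, rfl⟩)
    · simp [mem_restrictTotalDegree]
    · rw [SetLike.mem_coe, mem_restrictTotalDegree]
      exact (isHomogeneous_X R i).totalDegree_le

noncomputable def nedelecTri2Gen : Fin 8 → Mv × Mv :=
  ![(1, 0), (X 0, 0), (X 1, 0), (0, 1), (0, X 0), (0, X 1), rotMul (X 0), rotMul (X 1)]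

theorem nedelecTri2_eq_span : NedelecTri2 = span ℝ (Set.range nedelecTri2Gen) := by
  rw [NedelecTri2, restrictTotalDegree_one_eq_span, homogeneousSubmodule_one_eq_span_X,
    ← LinearMap.span_inl_union_inr, map_span, ← span_union]
  congr 1
  ext v
  simp [Fin.exists_fin_succ, nedelecTri2Gen, eq_comm]
  tauto

def shapeNT2Coeff : Matrix (Fin 8) (Fin 8) ℝ :=
  !![ 0,  0,  -2,  0,   4,  0,  -8,  0;
      0,  0,  -4,  0,   2,  0,   0, -8;
      0,  0,  -4, -2,   2,  6,   0, -8;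
      0,  0,   6,  4, -12, -6,   8,  8;
      4, -6, -12,  0,   6,  0,  -8, -8;
     -2,  6,   2,  0,  -4,  0,   8,  0;
      0,  0,  16,  0,  -8,  0,   8, 16;
      0,  0,  -8,  0,  16,  0, -16, -8]

theorem shapeNT2_eq_sum (j : Fin 8) :
    shapeNT2 j = ∑ i, shapeNT2Coeff j i • nedelecTri2Gen i := by
  fin_cases j <;>
  · apply Prod.ext <;>
    · simp [Fin.sum_univ_eight, shapeNT2, shapeNT2Coeff, nedelecTri2Gen, rotMul, smul_eq_C_mul,
        map_ofNat]
      ring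

theorem linearIndependent_shapeNT2 : LinearIndependent ℝ shapeNT2 := by
  rw [Fintype.linearIndependent_iff]
  intro g hg
  have hval (x : Fin 2 → ℝ) :
      ∑ j, g j * eval x (shapeNT2 j).1 = 0 ∧ ∑ j, g j * eval x (shapeNT2 j).2 = 0 := by
    have := congrArg (fun v : Mv × Mv => (eval x v.1, eval x v.2)) hg
    simpa [Prod.fst_sum, Prod.snd_sum, map_sum, smul_eval] using this
  obtain ⟨e₁, e₂⟩ := hval ![0, 0]
  obtain ⟨e₃, e₄⟩ := hval ![1, 0]
  obtain ⟨e₅, e₆⟩ := hval ![0, 1]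
  obtain ⟨e₇, e₈⟩ := hval ![1, 1]
  simp [Fin.sum_univ_eight, shapeNT2] at e₁ e₂ e₃ e₄ e₅ e₆ e₇ e₈
  intro j
  fin_cases j <;> simp <;> linarith

theorem shapeNT2_mem_nedelecTri2 (j : Fin 8) : shapeNT2 j ∈ NedelecTri2 := by
  rw [shapeNT2_eq_sum, nedelecTri2_eq_span]
  exact sum_mem fun i _ => smul_mem _ _ (subset_span ⟨i, rfl⟩)

instance : FiniteDimensional ℝ NedelecTri2 := by
  rw [nedelecTri2_eq_span]
  exact FiniteDimensional.span_of_finite ℝ (Set.finite_range _)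

theorem finrank_nedelecTri2_le : Module.finrank ℝ NedelecTri2 ≤ 8 := by
  rw [nedelecTri2_eq_span]
  exact finrank_range_le_card nedelecTri2Gen

theorem NT2_basis :
    (∀ j, shapeNT2 j ∈ NedelecTri2) ∧
    LinearIndependent ℝ shapeNT2 ∧
    Submodule.span ℝ (Set.range shapeNT2) = NedelecTri2 ∧
    Module.finrank ℝ NedelecTri2 = 8 := by
  have hrank : Module.finrank ℝ (span ℝ (Set.range shapeNT2)) = 8 := by
    simpa using finrank_span_eq_card linearIndependent_shapeNT2
  have hspan : span ℝ (Set.range shapeNT2) = NedelecTri2 :=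
    eq_of_le_of_finrank_le (span_le.mpr (Set.range_subset_iff.mpr shapeNT2_mem_nedelecTri2))
      (finrank_nedelecTri2_le.trans hrank.ge)
  exact ⟨shapeNT2_mem_nedelecTri2, linearIndependent_shapeNT2, hspan, hspan ▸ hrank⟩
end
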